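/- arXiv:1108.2685 — 2 statements merged into one kernel-verified Lean document; each statement's English description precedes it below -/
import Mathlib

section
/- In the Subset-Product reduction, a radius vector (δ₁,…,δ_m) with each δᵢ ∈ {0, log s(aᵢ)} satisfies Est ≥ B/|D|^{m-1} and Σᵢ δᵢ ≤ log B if and only if the set A' = {aᵢ : δᵢ = log s(aᵢ)} satisfies Π_{a∈A'} s(a) = B. -/
open scoped Classical

/-- In the Subset-Product reduction, a radius vector with each `δ i` either `0`
or `log s i` is feasible iff the corresponding subset has product exactly `B`. -/
theorem reduction_characterization {m : ℕ} (s : Fin m → ℕ)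
    (hs : ∀ i, 2 ≤ s i) (B : ℕ) (hB : 1 ≤ B) (D : ℝ)
    (hD : ∀ i, (s i : ℝ) < D)
    (h : Fin m → ℝ → ℝ)
    (hdef : ∀ i t, h i t = if t < Real.log (s i) then 1 else (s i : ℝ))
    (δ : Fin m → ℝ) (hδ : ∀ i, δ i = 0 ∨ δ i = Real.log (s i)) :
    ((B : ℝ) / D ^ (m - 1) ≤ (∏ i, h i (δ i)) / D ^ (m - 1) ∧
        (∑ i, δ i) ≤ Real.log B) ↔
      ∏ a ∈ Finset.univ.filter (fun i => δ i = Real.log (s i)), s a = B := by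
  set P : ℕ := ∏ a ∈ Finset.univ.filter (fun i => δ i = Real.log (s i)), s a with hP
  have hlog1 : ∀ i : Fin m, 0 < Real.log (s i) := by
    intro i
    apply Real.log_pos
    exact_mod_cast Nat.lt_of_lt_of_le Nat.one_lt_two (hs i)
  have hprod : (∏ i, h i (δ i)) = (P : ℝ) := by
    rw [hP, Nat.cast_prod, Finset.prod_filter]
    apply Finset.prod_congr rfl
    intro i _
    rcases hδ i with h0 | h1
    · rw [hdef, h0, if_pos (hlog1 i), if_neg]
      exact fun hc => (hlog1 i).ne (by rw[hc])
    · rw [hdef, h1, if_neg (lt_irrefl _), if_pos rfl]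
  have hsum : (∑ i, δ i) = Real.log P := by
    rw [hP, Nat.cast_prod, Real.log_prod]
    · rw [Finset.sum_filter]
      apply Finset.sum_congr rfl
      intro i _
      rcases hδ i with h0 | h1
      · rw [if_neg, h0]
        exact fun hc => (hlog1 i).ne (by rw [← hc, h0])
      · rw [if_pos h1, h1]
    · intro i _
      have := hs i
      positivity
  have hDpos : (0:ℝ) < D ^ (m - 1) := by
    rcases Nat.eq_zero_or_pos m with hm | hm
    · subst hm; simp
    · have : (0:ℝ) < D := lt_of_le_of_lt (by positivity) (hD ⟨0, hm⟩)
      positivity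
  have hPpos : 0 < P := by
    rw [hP]
    exact Finset.prod_pos fun i _ => lt_of_lt_of_le Nat.zero_lt_two (hs i)
  rw [hprod, hsum, div_le_div_iff_of_pos_right hDpos, Nat.cast_le,
    Real.log_le_log_iff (by exact_mod_cast hPpos) (by exact_mod_cast hB),
    Nat.cast_le]
  omega
end

section
/- In the precision analysis of the reduction, let B ≥ 1 and suppose each of the n+1 logarithm values log s(aᵢ) and log B is perturbed by at most ε with ε < 1/((n+2)(B+1)); then, since log((B+1)/B) ≥ 1/(B+1), for a subset A' with Π_{a∈A'} s(a) ≥ B+1 the perturbed sum Σ_{a∈A'} (log s(a) ± ε) still strictly exceeds the perturbed threshold log B + ε, so the reduction distinguishes product = B from product ≥ B+1. -/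
/-- Precision analysis of the reduction: `log((B+1)/B) ≥ 1/(B+1)`, and if
`ε < 1/((n+2)(B+1))` then for any subset of at most `n` elements whose sizes
have product at least `B+1`, the perturbed sum of logs (each term decreased by
`ε`) still strictly exceeds the perturbed threshold `log B + ε`. -/
theorem precision_analysis {α : Type*} (s : α → ℕ) (hs : ∀ a, 1 ≤ s a)
    (B : ℕ) (hB : 1 ≤ B) (n : ℕ) (ε : ℝ) (hε : 0 < ε)
    (hεsmall : ε < 1 / ((n + 2 : ℝ) * (B + 1))) :
    Real.log (((B : ℝ) + 1) / B) ≥ 1 / ((B : ℝ) + 1) ∧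
    ∀ A' : Finset α, A'.card ≤ n → (B + 1 : ℕ) ≤ ∏ a ∈ A', s a →
      (∑ a ∈ A', (Real.log (s a) - ε)) > Real.log B + ε := by
  have hB1 : (1:ℝ) ≤ B := by exact_mod_cast hB
  have hB0 : (0:ℝ) < B := by linarith
  have hB10 : (0:ℝ) < (B:ℝ) + 1 := by linarith
  have hlog : Real.log (((B : ℝ) + 1) / B) ≥ 1 / ((B : ℝ) + 1) := by
    have h := Real.log_le_sub_one_of_pos (x := (B:ℝ) / (B + 1)) (by positivity)
    have hd : Real.log ((B:ℝ) / (B + 1)) = Real.log B - Real.log (B + 1) :=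
      Real.log_div (by linarith) (by linarith)
    have hd' : Real.log (((B:ℝ) + 1) / B) = Real.log (B + 1) - Real.log B :=
      Real.log_div (by linarith) (by linarith)
    have : (B:ℝ) / (B + 1) - 1 = -(1 / ((B:ℝ) + 1)) := by
      field_simp
      ring
    rw [hd, this] at h
    rw [hd']
    linarith
  refine ⟨hlog, fun A' hcard hprod => ?_⟩
  have hsum : ∑ a ∈ A', Real.log (s a) = Real.log (∏ a ∈ A', (s a : ℝ)) := by
    rw [Real.log_prod]
    intro a ha
    have := hs a
    positivity
  have hprodR : ((B:ℝ) + 1) ≤ ∏ a ∈ A', (s a : ℝ) := by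
    push_cast
    exact_mod_cast hprod
  have hlogB1 : Real.log ((B:ℝ) + 1) ≤ Real.log (∏ a ∈ A', (s a : ℝ)) :=
    Real.log_le_log (by linarith) hprodR
  have hsum2 : ∑ a ∈ A', (Real.log (s a) - ε)
      = (∑ a ∈ A', Real.log (s a)) - A'.card * ε := by
    rw [Finset.sum_sub_distrib, Finset.sum_const, nsmul_eq_mul]
  have hcardε : (A'.card : ℝ) * ε ≤ n * ε := by
    have : (A'.card : ℝ) ≤ n := by exact_mod_cast hcard
    nlinarith
  have hεb : (n + 2 : ℝ) * ε < 1 / ((B:ℝ) + 1) := by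
    have hpos : (0:ℝ) < (n + 2 : ℝ) * (B + 1) := by positivity
    rw [lt_div_iff₀ hB10]
    rw [lt_div_iff₀ hpos] at hεsmall
    nlinarith
  have hd' : Real.log (((B:ℝ) + 1) / B) = Real.log ((B:ℝ) + 1) - Real.log B :=
    Real.log_div (by linarith) (by linarith)
  have : Real.log ((B:ℝ) + 1) - Real.log B ≥ 1 / ((B:ℝ) + 1) := by
    rw [← hd']; exact hlog
  rw [hsum2, hsum]
  nlinarith [hε]
end
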